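/- arXiv:1704.06358 — 2 statements merged into one kernel-verified Lean document; each statement's English description precedes it below -/
import Mathlib

section
/- Let $E \subseteq \mathbb{R}^N$ be a bounded convex set with nonempty interior, and let $F \subseteq E$ be closed (hence bounded). Fix $r > 0$. Then there exists $r' > 0$ such that for all $x \in F$ there exists $x' \in E$ with $B(x', r') \subseteq B(x, r) \cap E$. -/
theorem stmt_5 {N : ℕ} (E F : Set (EuclideanSpace ℝ (Fin N)))
    (hEb : Bornology.IsBounded E) (hEc : Convex ℝ E) (hEint : (interior E).Nonempty)
    (hFE : F ⊆ E) (hF : IsClosed F) (r : ℝ) (hr : 0 < r) :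
    ∃ r' > 0, ∀ x ∈ F, ∃ x' ∈ E, Metric.ball x' r' ⊆ Metric.ball x r ∩ E := by
  obtain ⟨z, hz⟩ := hEint
  obtain ⟨ρ, hρ, hball⟩ := Metric.isOpen_iff.1 isOpen_interior z hz
  have hballE : Metric.ball z ρ ⊆ E := hball.trans interior_subset
  have hzE : z ∈ E := hballE (Metric.mem_ball_self hρ)
  obtain ⟨R, hR0, hER⟩ := hEb.subset_ball_lt 0 z
  have hρR : 0 < ρ + R := by linarith
  set t : ℝ := min 1 (r / (2 * (ρ + R))) with ht_def
  have ht0 : 0 < t := lt_min one_pos (by positivity)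
  have ht1 : t ≤ 1 := min_le_left _ _
  have htr : t * (ρ + R) < r := by
    have h2 : t ≤ r / (2 * (ρ + R)) := min_le_right _ _
    have h3 : t * (ρ + R) ≤ r / (2 * (ρ + R)) * (ρ + R) := by nlinarith
    have h4 : r / (2 * (ρ + R)) * (ρ + R) = r / 2 := by field_simp
    nlinarith
  refine ⟨t * ρ, by positivity, fun x hx => ?_⟩
  have hxE : x ∈ E := hFE hx
  refine ⟨x + t • (z - x), ?_, ?_⟩
  · have : (1 - t) • x + t • z ∈ E := hEc hxE hzE (by linarith) ht0.le (by ring)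
    convert this using 1
    module
  · intro w hw
    have hwx' : ‖w - (x + t • (z - x))‖ < t * ρ := by
      rw [Metric.mem_ball, dist_eq_norm] at hw; exact hw
    have hdzx : dist x z < R := by
      have := hER hxE; rwa [Metric.mem_ball] at this
    constructor
    · rw [Metric.mem_ball, dist_eq_norm]
      have : w - x = (w - (x + t • (z - x))) + t • (z - x) := by module
      rw [this]
      calc ‖(w - (x + t • (z - x))) + t • (z - x)‖
          ≤ ‖w - (x + t • (z - x))‖ + ‖t • (z - x)‖ := norm_add_le _ _
        _ < t * ρ + t * R := by
            have : ‖t • (z - x)‖ = t * ‖z - x‖ := by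
              rw [norm_smul, Real.norm_of_nonneg ht0.le]
            rw [this]
            have : ‖z - x‖ < R := by rw [← dist_eq_norm, dist_comm]; exact hdzx
            nlinarith
        _ = t * (ρ + R) := by ring
        _ < r := htr
    · -- w = (1-t)•x + t•(z + t⁻¹•(w - x'))
      set v := w - (x + t • (z - x)) with hv
      have hmem : z + t⁻¹ • v ∈ Metric.ball z ρ := by
        rw [Metric.mem_ball, dist_eq_norm]
        have : z + t⁻¹ • v - z = t⁻¹ • v := by module
        rw [this, norm_smul, Real.norm_of_nonneg (by positivity)]
        rw [inv_mul_lt_iff₀ ht0]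
        linarith [hwx']
      have hconv : (1 - t) • x + t • (z + t⁻¹ • v) ∈ E :=
        hEc hxE (hballE hmem) (by linarith) ht0.le (by ring)
      convert hconv using 1
      have htv : t • (t⁻¹ • v) = v := by
        rw [smul_smul, mul_inv_cancel₀ ht0.ne']; simp
      rw [smul_add, htv]
      rw [hv]; module
end

section
/- The point $\mathbf{Z}^* = (1/4, 3/4, W/2, W/2)$ with $W = (1 - e^{-\lambda})^{-1}$ is a fixed point of the averaged map $F(\mathbf{x}) = \mathbb{E}[\Phi(\mathbf{x}, z)]$ for the two-category model on $[0,1]$ with uniform input: i.e., if $x_1 = 1/4$, $x_2 = 3/4$, $w_1 = w_2 = W/2$, then averaging the update over $z$ uniform on $[0,1]$ returns the same state. Concretely: $\int_0^{1/2} \frac{(1/4)(W/2)e^{-\lambda} + z}{(W/2)e^{-\lambda} + 1} \cdot 2\,dz = 1/4$ (interpreting the conditional mean of the updated first category mean given classification into category 1), and the expected weight update fixes $W/2$: $\frac{1}{2}((W/2)e^{-\lambda} + 1) + \frac{1}{2}(W/2)e^{-\lambda} = W/2$. -/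
theorem stmt_19 (lam : ℝ) (hlam : 0 < lam) (W : ℝ) (hW : W = (1 - Real.exp (-lam))⁻¹) :
    (∫ z in (0 : ℝ)..(1 / 2),
        (((1 / 4) * (W / 2) * Real.exp (-lam) + z) / ((W / 2) * Real.exp (-lam) + 1)) * 2)
      = 1 / 4 ∧
    (1 / 2) * ((W / 2) * Real.exp (-lam) + 1) + (1 / 2) * ((W / 2) * Real.exp (-lam)) = W / 2 := by
  have he1 : Real.exp (-lam) < 1 := by
    rw [Real.exp_lt_one_iff]; linarith
  have he0 : 0 < Real.exp (-lam) := Real.exp_pos _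
  have hWpos : 0 < W := by
    rw [hW]
    have : 0 < 1 - Real.exp (-lam) := by linarith
    exact inv_pos.mpr this
  set a : ℝ := Real.exp (-lam) with ha
  have hd : (0:ℝ) < (W / 2) * a + 1 := by positivity
  have hd' : (W / 2) * a + 1 ≠ 0 := ne_of_gt hd
  constructor
  · have hcongr : ∀ z : ℝ,
        (((1 / 4) * (W / 2) * a + z) / ((W / 2) * a + 1)) * 2
          = (2 / ((W / 2) * a + 1)) * z + 2 * ((1 / 4) * (W / 2) * a) / ((W / 2) * a + 1) := by
      intro z; ring
    rw [intervalIntegral.integral_congr (g := fun z =>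
        (2 / ((W / 2) * a + 1)) * z + 2 * ((1 / 4) * (W / 2) * a) / ((W / 2) * a + 1))
        (fun z _ => hcongr z)]
    rw [intervalIntegral.integral_add
        ((intervalIntegral.intervalIntegrable_id).const_mul _)
        (intervalIntegrable_const),
        intervalIntegral.integral_const_mul, integral_id, intervalIntegral.integral_const]
    field_simp
    ring_nf
    have h8 : (8 + W * a * 4 : ℝ) ≠ 0 := by positivity
    field_simp
    ring
  · have hWe : W * (1 - a) = 1 := by
      rw [hW]
      exact inv_mul_cancel₀ (by linarith)
    nlinarith [hWe]
end
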